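/- Let A and B be 2-categories such that the underlying 1-category of A is free on a graph, and let (F, ι, χ): A → B be a pseudofunctor. Then there is a unique strict 2-functor F̄: A → B agreeing with F on objects and on the generating morphisms, together with an invertible icon e: F̄ → F whose component on the empty path at an object X is the unitor ι_X: 1_{FX} ⇒ F1_X, whose component on each generating morphism is the identity, and whose component on a composite h∘g (g generating, h non-identity) is the pasting of e_h with the compositor χ_{h,g}; moreover F̄ acts on a 2-cell φ: f ⇒ g by the composite e_g⁻¹ ∘ Fφ ∘ e_f. -/

import Mathlib

set_option autoImplicit false

universe u v

/-- A (strict) 2-category. -/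
structure TwoCat : Type (u + 1) where
  Obj : Type u
  Hom : Obj → Obj → Type u
  id1 : ∀ X : Obj, Hom X X
  comp1 : ∀ {X Y Z : Obj}, Hom X Y → Hom Y Z → Hom X Z
  Two : ∀ {X Y : Obj}, Hom X Y → Hom X Y → Type u
  id2 : ∀ {X Y : Obj} (f : Hom X Y), Two f f
  vcomp2 : ∀ {X Y : Obj} {f g h : Hom X Y}, Two f g → Two g h → Two f h
  whiskL : ∀ {X Y Z : Obj} (f : Hom X Y) {g h : Hom Y Z}, Two g h → Two (comp1 f g) (comp1 f h)
  whiskR : ∀ {X Y Z : Obj} {f g : Hom X Y}, Two f g → ∀ h : Hom Y Z, Two (comp1 f h) (comp1 g h)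
  id_comp1 : ∀ {X Y : Obj} (f : Hom X Y), comp1 (id1 X) f = f
  comp1_id : ∀ {X Y : Obj} (f : Hom X Y), comp1 f (id1 Y) = f
  comp1_assoc : ∀ {W X Y Z : Obj} (f : Hom W X) (g : Hom X Y) (h : Hom Y Z),
      comp1 (comp1 f g) h = comp1 f (comp1 g h)
  id_vcomp2 : ∀ {X Y : Obj} {f g : Hom X Y} (φ : Two f g), vcomp2 (id2 f) φ = φ
  vcomp2_id : ∀ {X Y : Obj} {f g : Hom X Y} (φ : Two f g), vcomp2 φ (id2 g) = φ
  vcomp2_assoc : ∀ {X Y : Obj} {f g h k : Hom X Y} (φ : Two f g) (ψ : Two g h) (χ : Two h k),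
      vcomp2 (vcomp2 φ ψ) χ = vcomp2 φ (vcomp2 ψ χ)
  whiskL_id2 : ∀ {X Y Z : Obj} (f : Hom X Y) (g : Hom Y Z), whiskL f (id2 g) = id2 (comp1 f g)
  whiskR_id2 : ∀ {X Y Z : Obj} (f : Hom X Y) (g : Hom Y Z), whiskR (id2 f) g = id2 (comp1 f g)
  whiskL_vcomp2 : ∀ {X Y Z : Obj} (f : Hom X Y) {g h k : Hom Y Z} (φ : Two g h) (ψ : Two h k),
      whiskL f (vcomp2 φ ψ) = vcomp2 (whiskL f φ) (whiskL f ψ)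
  whiskR_vcomp2 : ∀ {X Y Z : Obj} {f g h : Hom X Y} (φ : Two f g) (ψ : Two g h) (k : Hom Y Z),
      whiskR (vcomp2 φ ψ) k = vcomp2 (whiskR φ k) (whiskR ψ k)
  whiskL_id1 : ∀ {X Y : Obj} {f g : Hom X Y} (φ : Two f g), HEq (whiskL (id1 X) φ) φ
  whiskR_id1 : ∀ {X Y : Obj} {f g : Hom X Y} (φ : Two f g), HEq (whiskR φ (id1 Y)) φ
  whiskL_comp1 : ∀ {W X Y Z : Obj} (e : Hom W X) (f : Hom X Y) {g h : Hom Y Z} (φ : Two g h),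
      HEq (whiskL (comp1 e f) φ) (whiskL e (whiskL f φ))
  whiskR_comp1 : ∀ {W X Y Z : Obj} {f g : Hom W X} (φ : Two f g) (h : Hom X Y) (k : Hom Y Z),
      HEq (whiskR φ (comp1 h k)) (whiskR (whiskR φ h) k)
  interchange : ∀ {X Y Z : Obj} {f f' : Hom X Y} {g g' : Hom Y Z} (φ : Two f f') (ψ : Two g g'),
      vcomp2 (whiskR φ g) (whiskL f' ψ) = vcomp2 (whiskL f ψ) (whiskR φ g')

namespace TwoCat

variable (B : TwoCat.{u})

/-- Transport a 1-cell along equalities of objects. -/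
def castHom {X X' Y Y' : B.Obj} (hX : X = X') (hY : Y = Y') (f : B.Hom X Y) : B.Hom X' Y' :=
  match hX, hY with
  | rfl, rfl => f

/-- Transport a 2-cell along equalities of its boundary. -/
def cast2 {X Y : B.Obj} {f f' g g' : B.Hom X Y} (hf : f = f') (hg : g = g')
    (φ : B.Two f g) : B.Two f' g' :=
  match hf, hg with
  | rfl, rfl => φ

def IsInvertible2 {X Y : B.Obj} {f g : B.Hom X Y} (φ : B.Two f g) : Prop :=
  ∃ ψ : B.Two g f, B.vcomp2 φ ψ = B.id2 f ∧ B.vcomp2 ψ φ = B.id2 g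

def IsIdentity2 {X Y : B.Obj} {f g : B.Hom X Y} (φ : B.Two f g) : Prop :=
  ∃ _ : f = g, HEq φ (B.id2 f)

end TwoCat

/-- A pseudofunctor `(F, ι, χ)` between 2-categories. -/
structure TwoPseudoFunctor (A : TwoCat.{u}) (B : TwoCat.{v}) : Type (max u v) where
  obj : A.Obj → B.Obj
  map1 : ∀ {X Y : A.Obj}, A.Hom X Y → B.Hom (obj X) (obj Y)
  map2 : ∀ {X Y : A.Obj} {f g : A.Hom X Y}, A.Two f g → B.Two (map1 f) (map1 g)
  map2_id : ∀ {X Y : A.Obj} (f : A.Hom X Y), map2 (A.id2 f) = B.id2 (map1 f)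
  map2_vcomp : ∀ {X Y : A.Obj} {f g h : A.Hom X Y} (φ : A.Two f g) (ψ : A.Two g h),
      map2 (A.vcomp2 φ ψ) = B.vcomp2 (map2 φ) (map2 ψ)
  /-- the unitor `ι_X : 1_{FX} ⇒ F(1_X)` -/
  unitor : ∀ X : A.Obj, B.Two (B.id1 (obj X)) (map1 (A.id1 X))
  unitor_inv : ∀ X : A.Obj, B.IsInvertible2 (unitor X)
  /-- the compositor `χ_{g,f} : Ff ⋆ Fg ⇒ F(f ⋆ g)` -/
  comp2 : ∀ {X Y Z : A.Obj} (f : A.Hom X Y) (g : A.Hom Y Z),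
      B.Two (B.comp1 (map1 f) (map1 g)) (map1 (A.comp1 f g))
  comp2_inv : ∀ {X Y Z : A.Obj} (f : A.Hom X Y) (g : A.Hom Y Z), B.IsInvertible2 (comp2 f g)
  comp2_natR : ∀ {X Y Z : A.Obj} {f f' : A.Hom X Y} (φ : A.Two f f') (g : A.Hom Y Z),
      B.vcomp2 (B.whiskR (map2 φ) (map1 g)) (comp2 f' g)
        = B.vcomp2 (comp2 f g) (map2 (A.whiskR φ g))
  comp2_natL : ∀ {X Y Z : A.Obj} (f : A.Hom X Y) {g g' : A.Hom Y Z} (φ : A.Two g g'),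
      B.vcomp2 (B.whiskL (map1 f) (map2 φ)) (comp2 f g')
        = B.vcomp2 (comp2 f g) (map2 (A.whiskL f φ))
  unit_law_l : ∀ {X Y : A.Obj} (f : A.Hom X Y),
      B.vcomp2 (B.whiskR (unitor X) (map1 f)) (comp2 (A.id1 X) f)
        = B.cast2 (B.id_comp1 (map1 f)).symm (by rw [A.id_comp1]) (B.id2 (map1 f))
  unit_law_r : ∀ {X Y : A.Obj} (f : A.Hom X Y),
      B.vcomp2 (B.whiskL (map1 f) (unitor Y)) (comp2 f (A.id1 Y))
        = B.cast2 (B.comp1_id (map1 f)).symm (by rw [A.comp1_id]) (B.id2 (map1 f))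
  assoc_law : ∀ {W X Y Z : A.Obj} (f : A.Hom W X) (g : A.Hom X Y) (h : A.Hom Y Z),
      B.vcomp2 (B.whiskR (comp2 f g) (map1 h)) (comp2 (A.comp1 f g) h)
        = B.cast2 (B.comp1_assoc (map1 f) (map1 g) (map1 h)).symm (by rw [A.comp1_assoc])
            (B.vcomp2 (B.whiskL (map1 f) (comp2 g h)) (comp2 f (A.comp1 g h)))

/-- A strict 2-functor between 2-categories. -/
structure TwoFunctor (A : TwoCat.{u}) (B : TwoCat.{v}) : Type (max u v) where
  obj : A.Obj → B.Obj
  map1 : ∀ {X Y : A.Obj}, A.Hom X Y → B.Hom (obj X) (obj Y)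
  map2 : ∀ {X Y : A.Obj} {f g : A.Hom X Y}, A.Two f g → B.Two (map1 f) (map1 g)
  map1_id : ∀ X : A.Obj, map1 (A.id1 X) = B.id1 (obj X)
  map1_comp : ∀ {X Y Z : A.Obj} (f : A.Hom X Y) (g : A.Hom Y Z),
      map1 (A.comp1 f g) = B.comp1 (map1 f) (map1 g)
  map2_id : ∀ {X Y : A.Obj} (f : A.Hom X Y), map2 (A.id2 f) = B.id2 (map1 f)
  map2_vcomp : ∀ {X Y : A.Obj} {f g h : A.Hom X Y} (φ : A.Two f g) (ψ : A.Two g h),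
      map2 (A.vcomp2 φ ψ) = B.vcomp2 (map2 φ) (map2 ψ)
  map2_whiskL : ∀ {X Y Z : A.Obj} (f : A.Hom X Y) {g h : A.Hom Y Z} (φ : A.Two g h),
      HEq (map2 (A.whiskL f φ)) (B.whiskL (map1 f) (map2 φ))
  map2_whiskR : ∀ {X Y Z : A.Obj} {f g : A.Hom X Y} (φ : A.Two f g) (h : A.Hom Y Z),
      HEq (map2 (A.whiskR φ h)) (B.whiskR (map2 φ) (map1 h))

/-- Paths in a graph. -/
inductive GPath {V : Type u} (E : V → V → Type u) : V → V → Type u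
  | nil (X : V) : GPath E X X
  | cons {X Y Z : V} (ρ : GPath E X Y) (e : E Y Z) : GPath E X Z

/-- Evaluation of a path of generating morphisms in a 2-category. -/
def evalP (A : TwoCat.{u}) {E : A.Obj → A.Obj → Type u}
    (gen : ∀ {X Y : A.Obj}, E X Y → A.Hom X Y) :
    ∀ {X Y : A.Obj}, GPath E X Y → A.Hom X Y
  | _, _, .nil X => A.id1 X
  | _, _, .cons ρ e => A.comp1 (evalP A gen ρ) (gen e)

/-!
Every 1-cell of `A` is the composite of a unique path `a₁ ⋯ aₙ` of generators, so one can put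
`F̄ (a₁ ⋯ aₙ) = F a₁ ⋯ F aₙ` and build `e : F̄ f ⇒ F f` from the unitor by adding one compositor
per generator at the end of the path: `e_{f b} = (e_f ▷ F b) · χ_{f,b}`. With `F̄` acting on
2-cells by conjugation with `e`, whiskering by a generator is preserved by naturality of `χ`,
using this recursion on the right and the recursion `e_{a h} = (F a ◁ e_h) · χ_{a,h}` on the left.
The left recursion follows from the right one by the associativity law of `F`, once one knows
that `F u ◁ (e_f ▷ F v) = (F u ◁ e_f) ▷ F v`. This commutation of left and right whiskering is
not an axiom of `TwoCat`; it is derived for unitors and compositors from the unit and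
associativity laws by cancelling invertible compositors. Uniqueness: `e` is determined on
identities and by the left recursion, hence everywhere, and then so is `F̄`.
-/

namespace TwoCat

variable {C : TwoCat.{u}}

theorem cast2_heq {X Y : C.Obj} {f f' g g' : C.Hom X Y} (hf : f = f') (hg : g = g')
    (φ : C.Two f g) : HEq (C.cast2 hf hg φ) φ := by
  subst hf hg; rfl

theorem castHom_heq {X X' Y Y' : C.Obj} (hX : X = X') (hY : Y = Y') (f : C.Hom X Y) :
    HEq (C.castHom hX hY f) f := by
  subst hX hY; rfl

theorem id1_hcongr {X X' : C.Obj} (hX : X = X') : HEq (C.id1 X) (C.id1 X') := by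
  subst hX; rfl

theorem comp1_hcongr {X X' Y Y' Z Z' : C.Obj} (hX : X = X') (hY : Y = Y') (hZ : Z = Z')
    {f : C.Hom X Y} {f' : C.Hom X' Y'} {g : C.Hom Y Z} {g' : C.Hom Y' Z'}
    (hf : HEq f f') (hg : HEq g g') : HEq (C.comp1 f g) (C.comp1 f' g') := by
  subst hX hY hZ; cases hf; cases hg; rfl

theorem id2_hcongr {X Y : C.Obj} {f f' : C.Hom X Y} (hf : f = f') :
    HEq (C.id2 f) (C.id2 f') := by
  subst hf; rfl

theorem vcomp2_hcongr {X Y : C.Obj} {f g h f' g' h' : C.Hom X Y}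
    (hf : f = f') (hg : g = g') (hh : h = h')
    {φ : C.Two f g} {ψ : C.Two g h} {φ' : C.Two f' g'} {ψ' : C.Two g' h'}
    (hφ : HEq φ φ') (hψ : HEq ψ ψ') : HEq (C.vcomp2 φ ψ) (C.vcomp2 φ' ψ') := by
  subst hf hg hh; cases hφ; cases hψ; rfl

theorem whiskL_hcongr {X Y Z : C.Obj} {f f' : C.Hom X Y} {g h g' h' : C.Hom Y Z}
    (hf : f = f') (hg : g = g') (hh : h = h')
    {φ : C.Two g h} {φ' : C.Two g' h'} (hφ : HEq φ φ') :
    HEq (C.whiskL f φ) (C.whiskL f' φ') := by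
  subst hf hg hh; cases hφ; rfl

theorem whiskR_hcongr {X Y Z : C.Obj} {f g f' g' : C.Hom X Y} {h h' : C.Hom Y Z}
    (hf : f = f') (hg : g = g') (hh : h = h')
    {φ : C.Two f g} {φ' : C.Two f' g'} (hφ : HEq φ φ') :
    HEq (C.whiskR φ h) (C.whiskR φ' h') := by
  subst hf hg hh; cases hφ; rfl

theorem inverse_heq_of_heq {X Y : C.Obj} {f g f' g' : C.Hom X Y} (hf : f = f') (hg : g = g')
    {φ : C.Two f g} {ψ : C.Two g f} {φ' : C.Two f' g'} {ψ' : C.Two g' f'} (hφ : HEq φ φ')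
    (hφψ : C.vcomp2 φ ψ = C.id2 f) (hψφ' : C.vcomp2 ψ' φ' = C.id2 g') : HEq ψ ψ' := by
  subst hf hg; cases hφ
  refine heq_of_eq ?_
  calc ψ = C.vcomp2 (C.vcomp2 ψ' φ) ψ := by rw [hψφ', C.id_vcomp2]
    _ = ψ' := by rw [C.vcomp2_assoc, hφψ, C.vcomp2_id]

namespace IsInvertible2

theorem vcomp2 {X Y : C.Obj} {f g h : C.Hom X Y} {φ : C.Two f g} {ψ : C.Two g h}
    (hφ : C.IsInvertible2 φ) (hψ : C.IsInvertible2 ψ) : C.IsInvertible2 (C.vcomp2 φ ψ) := by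
  obtain ⟨φ', hφ₁, hφ₂⟩ := hφ
  obtain ⟨ψ', hψ₁, hψ₂⟩ := hψ
  refine ⟨C.vcomp2 ψ' φ', ?_, ?_⟩
  · rw [C.vcomp2_assoc, ← C.vcomp2_assoc ψ, hψ₁, C.id_vcomp2, hφ₁]
  · rw [C.vcomp2_assoc, ← C.vcomp2_assoc φ', hφ₂, C.id_vcomp2, hψ₂]

theorem whiskL {X Y Z : C.Obj} (f : C.Hom X Y) {g h : C.Hom Y Z} {φ : C.Two g h}
    (hφ : C.IsInvertible2 φ) : C.IsInvertible2 (C.whiskL f φ) := by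
  obtain ⟨φ', h₁, h₂⟩ := hφ
  exact ⟨C.whiskL f φ', by rw [← C.whiskL_vcomp2, h₁, C.whiskL_id2],
    by rw [← C.whiskL_vcomp2, h₂, C.whiskL_id2]⟩

theorem whiskR {X Y Z : C.Obj} {f g : C.Hom X Y} {φ : C.Two f g} (h : C.Hom Y Z)
    (hφ : C.IsInvertible2 φ) : C.IsInvertible2 (C.whiskR φ h) := by
  obtain ⟨φ', h₁, h₂⟩ := hφ
  exact ⟨C.whiskR φ' h, by rw [← C.whiskR_vcomp2, h₁, C.whiskR_id2],
    by rw [← C.whiskR_vcomp2, h₂, C.whiskR_id2]⟩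

theorem of_heq {X Y : C.Obj} {f g f' g' : C.Hom X Y} (hf : f = f') (hg : g = g')
    {φ : C.Two f g} {φ' : C.Two f' g'} (hφφ' : HEq φ φ') (hφ : C.IsInvertible2 φ) :
    C.IsInvertible2 φ' := by
  subst hf hg; cases hφφ'; exact hφ

theorem cancel_right {X Y : C.Obj} {f g h : C.Hom X Y} {φ ψ : C.Two f g} {τ : C.Two g h}
    (hτ : C.IsInvertible2 τ) (h : C.vcomp2 φ τ = C.vcomp2 ψ τ) : φ = ψ := by
  obtain ⟨τ', hττ', -⟩ := hτ
  simpa only [C.vcomp2_assoc, hττ', C.vcomp2_id] using congrArg (C.vcomp2 · τ') h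

theorem hcancel_right {X Y : C.Obj} {f g h f' g' h' : C.Hom X Y}
    (hf : f = f') (hg : g = g') (hh : h = h')
    {φ : C.Two f g} {τ : C.Two g h} {φ' : C.Two f' g'} {τ' : C.Two g' h'}
    (hτ : C.IsInvertible2 τ) (hττ' : HEq τ τ')
    (heq : HEq (C.vcomp2 φ τ) (C.vcomp2 φ' τ')) : HEq φ φ' := by
  subst hf hg hh; cases hττ'
  exact heq_of_eq (hτ.cancel_right (eq_of_heq heq))

end IsInvertible2

/-- The axioms of `TwoCat` do not make left and right whiskering commute; this property is
established below only for the 2-cells built from the coherence data of a pseudofunctor. -/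
def WhiskerAssoc {O P Q R : C.Obj} (u : C.Hom O P) {s t : C.Hom P Q} (ξ : C.Two s t)
    (v : C.Hom Q R) : Prop :=
  HEq (C.whiskL u (C.whiskR ξ v)) (C.whiskR (C.whiskL u ξ) v)

namespace WhiskerAssoc

variable {O P Q R : C.Obj} {u : C.Hom O P} {s t : C.Hom P Q}

theorem vcomp2 {w : C.Hom P Q} {ξ : C.Two s t} {ζ : C.Two t w} {v : C.Hom Q R}
    (hξ : C.WhiskerAssoc u ξ v) (hζ : C.WhiskerAssoc u ζ v) :
    C.WhiskerAssoc u (C.vcomp2 ξ ζ) v := by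
  unfold WhiskerAssoc
  rw [C.whiskR_vcomp2, C.whiskL_vcomp2, C.whiskL_vcomp2, C.whiskR_vcomp2]
  exact C.vcomp2_hcongr (C.comp1_assoc u s v).symm (C.comp1_assoc u t v).symm
    (C.comp1_assoc u w v).symm hξ hζ

theorem of_heq {s' t' : C.Hom P Q} {ξ : C.Two s t} {ξ' : C.Two s' t'} {v : C.Hom Q R}
    (hs : s = s') (ht : t = t') (hξξ' : HEq ξ ξ') (hξ : C.WhiskerAssoc u ξ v) :
    C.WhiskerAssoc u ξ' v := by
  subst hs ht; cases hξξ'; exact hξ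

theorem of_invertible_right (ξ : C.Two s t) {v v' : C.Hom Q R} {γ : C.Two v v'}
    (hγ : C.IsInvertible2 γ) (hξ : C.WhiskerAssoc u ξ v') : C.WhiskerAssoc u ξ v := by
  have left : C.vcomp2 (C.whiskL u (C.whiskR ξ v)) (C.whiskL u (C.whiskL t γ))
      = C.vcomp2 (C.whiskL u (C.whiskL s γ)) (C.whiskL u (C.whiskR ξ v')) := by
    rw [← C.whiskL_vcomp2, ← C.whiskL_vcomp2, C.interchange ξ γ]
  have middle : HEq (C.vcomp2 (C.whiskL u (C.whiskL s γ)) (C.whiskL u (C.whiskR ξ v')))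
      (C.vcomp2 (C.whiskL (C.comp1 u s) γ) (C.whiskR (C.whiskL u ξ) v')) :=
    C.vcomp2_hcongr (C.comp1_assoc u s v).symm (C.comp1_assoc u s v').symm
      (C.comp1_assoc u t v').symm (C.whiskL_comp1 u s γ).symm hξ
  have right := C.interchange (C.whiskL u ξ) γ
  exact (hγ.whiskL t |>.whiskL u).hcancel_right (C.comp1_assoc u s v).symm
    (C.comp1_assoc u t v).symm (C.comp1_assoc u t v').symm (C.whiskL_comp1 u t γ).symm
    ((heq_of_eq left).trans (middle.trans (heq_of_eq right.symm)))

theorem whiskR {S : C.Obj} {ξ : C.Two s t} {w : C.Hom Q R} {v : C.Hom R S}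
    (hξwv : C.WhiskerAssoc u ξ (C.comp1 w v)) (hξw : C.WhiskerAssoc u ξ w) :
    C.WhiskerAssoc u (C.whiskR ξ w) v := by
  have inner : HEq (C.whiskL u (C.whiskR (C.whiskR ξ w) v))
      (C.whiskL u (C.whiskR ξ (C.comp1 w v))) :=
    C.whiskL_hcongr rfl (C.comp1_assoc s w v) (C.comp1_assoc t w v)
      (C.whiskR_comp1 ξ w v).symm
  have outer : HEq (C.whiskR (C.whiskR (C.whiskL u ξ) w) v)
      (C.whiskR (C.whiskL u (C.whiskR ξ w)) v) :=
    C.whiskR_hcongr (C.comp1_assoc u s w) (C.comp1_assoc u t w) rfl hξw.symm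
  exact ((inner.trans hξwv).trans (C.whiskR_comp1 _ w v)).trans outer

end WhiskerAssoc

end TwoCat

theorem TwoFunctor.ext_of_heq {A : TwoCat.{u}} {B : TwoCat.{v}} {G G' : TwoFunctor A B}
    (hobj : ∀ X, G.obj X = G'.obj X)
    (hmap1 : ∀ {X Y : A.Obj} (f : A.Hom X Y), HEq (G.map1 f) (G'.map1 f))
    (hmap2 : ∀ {X Y : A.Obj} {f g : A.Hom X Y} (φ : A.Two f g), HEq (G.map2 φ) (G'.map2 φ)) :
    G = G' := by
  obtain ⟨obj, map1, map2, _⟩ := G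
  obtain ⟨obj', map1', map2', _⟩ := G'
  obtain rfl : obj = obj' := funext hobj
  obtain rfl : @map1 = @map1' := by
    funext X Y f; exact eq_of_heq (hmap1 f)
  obtain rfl : @map2 = @map2' := by
    funext X Y f g φ; exact eq_of_heq (hmap2 φ)
  rfl

namespace TwoPseudoFunctor

variable {A : TwoCat.{u}} {B : TwoCat.{v}} (F : TwoPseudoFunctor A B)

theorem unit_law_l_heq {X Y : A.Obj} (f : A.Hom X Y) :
    HEq (B.vcomp2 (B.whiskR (F.unitor X) (F.map1 f)) (F.comp2 (A.id1 X) f))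
      (B.id2 (F.map1 f)) := by
  rw [F.unit_law_l]; exact B.cast2_heq _ _ _

theorem unit_law_r_heq {X Y : A.Obj} (f : A.Hom X Y) :
    HEq (B.vcomp2 (B.whiskL (F.map1 f) (F.unitor Y)) (F.comp2 f (A.id1 Y)))
      (B.id2 (F.map1 f)) := by
  rw [F.unit_law_r]; exact B.cast2_heq _ _ _

theorem assoc_law_heq {W X Y Z : A.Obj} (f : A.Hom W X) (g : A.Hom X Y) (h : A.Hom Y Z) :
    HEq (B.vcomp2 (B.whiskR (F.comp2 f g) (F.map1 h)) (F.comp2 (A.comp1 f g) h))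
      (B.vcomp2 (B.whiskL (F.map1 f) (F.comp2 g h)) (F.comp2 f (A.comp1 g h))) := by
  rw [F.assoc_law]; exact B.cast2_heq _ _ _

theorem comp2_hcongr {X Y Z : A.Obj} {f f' : A.Hom X Y} {g g' : A.Hom Y Z}
    (hf : f = f') (hg : g = g') : HEq (F.comp2 f g) (F.comp2 f' g') := by
  subst hf hg; rfl

theorem whiskerAssoc_comp2 {V W X Y Z : A.Obj} (f : A.Hom V W) (g : A.Hom W X)
    (h : A.Hom X Y) (k : A.Hom Y Z) : B.WhiskerAssoc (F.map1 f) (F.comp2 g h) (F.map1 k) := by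
  -- Follow both sides by the invertible `F f ◁ χ_{gh,k} · χ_{f,(gh)k}`, which the associativity
  -- law identifies with `χ_{f,gh} ▷ F k · χ_{f(gh),k}`; both composites then rewrite, by the
  -- associativity law and interchange, to the same composite of compositors.
  refine (((F.comp2_inv _ _).whiskL _).vcomp2 (F.comp2_inv _ _)).hcancel_right
    (B.comp1_assoc _ _ _).symm (B.comp1_assoc _ _ _).symm
    (congrArg F.map1 (A.comp1_assoc f (A.comp1 g h) k).symm)
    (F.assoc_law_heq f (A.comp1 g h) k).symm ?_
  rw [← B.vcomp2_assoc, ← B.whiskL_vcomp2, ← B.vcomp2_assoc, ← B.whiskR_vcomp2]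
  have left : HEq
      (B.vcomp2 (B.whiskL (F.map1 f)
        (B.vcomp2 (B.whiskR (F.comp2 g h) (F.map1 k)) (F.comp2 (A.comp1 g h) k)))
        (F.comp2 f (A.comp1 (A.comp1 g h) k)))
      (B.vcomp2 (B.whiskL (B.comp1 (F.map1 f) (F.map1 g)) (F.comp2 h k))
        (B.vcomp2 (B.whiskR (F.comp2 f g) (F.map1 (A.comp1 h k)))
          (F.comp2 (A.comp1 f g) (A.comp1 h k)))) := by
    refine HEq.trans (b := B.vcomp2 (B.whiskL (F.map1 f)
      (B.vcomp2 (B.whiskL (F.map1 g) (F.comp2 h k)) (F.comp2 g (A.comp1 h k))))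
        (F.comp2 f (A.comp1 g (A.comp1 h k)))) ?_ ?_
    · congr! 1 <;> first | simp only [A.comp1_assoc, B.comp1_assoc] | skip
      · congr! 1 <;> first | simp only [A.comp1_assoc, B.comp1_assoc] | skip
        exact F.assoc_law_heq g h k
      · exact F.comp2_hcongr rfl (A.comp1_assoc g h k)
    · rw [B.whiskL_vcomp2, B.vcomp2_assoc]
      congr! 1 <;> first | simp only [A.comp1_assoc, B.comp1_assoc] | skip
      · exact (B.whiskL_comp1 _ _ _).symm
      · exact (F.assoc_law_heq f g (A.comp1 h k)).symm
  have right : HEq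
      (B.vcomp2 (B.whiskR (F.comp2 f g) (B.comp1 (F.map1 h) (F.map1 k)))
        (B.vcomp2 (B.whiskL (F.map1 (A.comp1 f g)) (F.comp2 h k))
          (F.comp2 (A.comp1 f g) (A.comp1 h k))))
      (B.vcomp2 (B.whiskR (B.vcomp2 (B.whiskL (F.map1 f) (F.comp2 g h))
        (F.comp2 f (A.comp1 g h))) (F.map1 k)) (F.comp2 (A.comp1 f (A.comp1 g h)) k)) := by
    refine HEq.trans (b := B.vcomp2 (B.whiskR (B.vcomp2 (B.whiskR (F.comp2 f g) (F.map1 h))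
        (F.comp2 (A.comp1 f g) h)) (F.map1 k)) (F.comp2 (A.comp1 (A.comp1 f g) h) k)) ?_ ?_
    · rw [B.whiskR_vcomp2, B.vcomp2_assoc]
      congr! 1 <;> first | simp only [A.comp1_assoc, B.comp1_assoc] | skip
      · exact B.whiskR_comp1 _ _ _
      · exact (F.assoc_law_heq (A.comp1 f g) h k).symm
    · congr! 1 <;> first | simp only [A.comp1_assoc, B.comp1_assoc] | skip
      · congr! 1 <;> first | simp only [A.comp1_assoc, B.comp1_assoc] | skip
        exact F.assoc_law_heq f g h
      · exact F.comp2_hcongr (A.comp1_assoc f g h) rfl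
  have swap := B.interchange (F.comp2 f g) (F.comp2 h k)
  rw [← B.vcomp2_assoc, ← swap, B.vcomp2_assoc] at left
  exact left.trans right

theorem whiskerAssoc_unitor {W X Y : A.Obj} (f : A.Hom W X) (k : A.Hom X Y) :
    B.WhiskerAssoc (F.map1 f) (F.unitor X) (F.map1 k) := by
  refine (((F.comp2_inv _ _).whiskL _).vcomp2 (F.comp2_inv _ _)).hcancel_right
    (B.comp1_assoc _ _ _).symm (B.comp1_assoc _ _ _).symm
    (congrArg F.map1 (A.comp1_assoc f (A.id1 X) k).symm)
    (F.assoc_law_heq f (A.id1 X) k).symm ?_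
  rw [← B.vcomp2_assoc, ← B.whiskL_vcomp2, ← B.vcomp2_assoc, ← B.whiskR_vcomp2]
  refine HEq.trans (b := F.comp2 f k) ?_ ?_
  · refine HEq.trans (b := B.vcomp2 (B.whiskL (F.map1 f) (B.id2 (F.map1 k))) (F.comp2 f k))
      ?_ (by rw [B.whiskL_id2, B.id_vcomp2])
    congr! 1 <;> first | simp only [A.id_comp1, B.id_comp1] | skip
    · congr! 1 <;> first | simp only [A.id_comp1, B.id_comp1] | skip
      exact F.unit_law_l_heq k
    · exact F.comp2_hcongr rfl (A.id_comp1 k)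
  · refine HEq.trans (b := B.vcomp2 (B.whiskR (B.id2 (F.map1 f)) (F.map1 k)) (F.comp2 f k))
      (by rw [B.whiskR_id2, B.id_vcomp2]) ?_
    congr! 1 <;> first | simp only [A.comp1_id, B.comp1_id] | skip
    · congr! 1 <;> first | simp only [A.comp1_id, B.comp1_id] | skip
      exact (F.unit_law_r_heq f).symm
    · exact F.comp2_hcongr (A.comp1_id f).symm rfl

end TwoPseudoFunctor

namespace GPath

variable {A : TwoCat.{u}} {E : A.Obj → A.Obj → Type u}

/-- `evalP` is compiled by well-founded recursion and does not reduce; this copy, defined with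
the recursor, computes on `nil` and `cons` by `rfl`. -/
noncomputable def compose (gen : ∀ {X Y : A.Obj}, E X Y → A.Hom X Y) {X Y : A.Obj}
    (q : GPath E X Y) : A.Hom X Y :=
  GPath.rec (motive := fun Y _ => A.Hom X Y) (A.id1 X) (fun _ b ih => A.comp1 ih (gen b)) q

theorem evalP_eq_compose (gen : ∀ {X Y : A.Obj}, E X Y → A.Hom X Y) {X Y : A.Obj}
    (q : GPath E X Y) : evalP A (fun {_ _} e => gen e) q = q.compose gen := by
  induction q with
  | nil => simp [evalP, compose]
  | cons q b ih => simp [evalP, ih, compose]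

end GPath

def TwoCat.IsFreeOn (A : TwoCat.{u}) {E : A.Obj → A.Obj → Type u}
    (gen : ∀ {X Y : A.Obj}, E X Y → A.Hom X Y) : Prop :=
  ∀ X Y : A.Obj, Function.Bijective fun q : GPath E X Y => q.compose gen

namespace TwoCat.IsFreeOn

variable {A : TwoCat.{u}} {E : A.Obj → A.Obj → Type u}
  {gen : ∀ {X Y : A.Obj}, E X Y → A.Hom X Y}

theorem of_bijective_evalP (h : ∀ X Y : A.Obj,
      Function.Bijective fun q : GPath E X Y => evalP A (fun {_ _} e => gen e) q) :
    A.IsFreeOn gen := fun X Y => by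
  simpa only [GPath.evalP_eq_compose] using h X Y

noncomputable def path (hfree : A.IsFreeOn gen) {X Y : A.Obj} (f : A.Hom X Y) : GPath E X Y :=
  (Equiv.ofBijective _ (hfree X Y)).symm f

theorem compose_path (hfree : A.IsFreeOn gen) {X Y : A.Obj} (f : A.Hom X Y) :
    (hfree.path f).compose gen = f :=
  (Equiv.ofBijective _ (hfree X Y)).apply_symm_apply f

theorem path_compose (hfree : A.IsFreeOn gen) {X Y : A.Obj} (q : GPath E X Y) :
    hfree.path (q.compose gen) = q :=
  (Equiv.ofBijective _ (hfree X Y)).symm_apply_apply q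

theorem path_id1 (hfree : A.IsFreeOn gen) (X : A.Obj) : hfree.path (A.id1 X) = .nil X :=
  hfree.path_compose (.nil X)

theorem path_comp1_gen (hfree : A.IsFreeOn gen) {X Y Z : A.Obj} (f : A.Hom X Y) (b : E Y Z) :
    hfree.path (A.comp1 f (gen b)) = .cons (hfree.path f) b := by
  conv_lhs => rw [← hfree.compose_path f]
  exact hfree.path_compose (.cons (hfree.path f) b)

@[elab_as_elim]
theorem hom_induction (hfree : A.IsFreeOn gen) {X : A.Obj}
    {P : ∀ {Y : A.Obj}, A.Hom X Y → Prop} (id1 : P (A.id1 X))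
    (comp1_gen : ∀ {Y Z : A.Obj} (f : A.Hom X Y) (b : E Y Z), P f → P (A.comp1 f (gen b)))
    {Y : A.Obj} (f : A.Hom X Y) : P f := by
  rw [← hfree.compose_path f]
  generalize hfree.path f = q
  clear f
  induction q with
  | nil => exact id1
  | cons q b ih => exact comp1_gen _ b ih

@[elab_as_elim]
theorem hom_induction_left (hfree : A.IsFreeOn gen) {Y : A.Obj}
    {P : ∀ {X : A.Obj}, A.Hom X Y → Prop} (id1 : P (A.id1 Y))
    (gen_comp1 : ∀ {X X' : A.Obj} (a : E X X') (h : A.Hom X' Y), P h → P (A.comp1 (gen a) h))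
    {X : A.Obj} (f : A.Hom X Y) : P f := by
  have prepend : ∀ {M : A.Obj} (g : A.Hom X M) (h : A.Hom M Y), P h → P (A.comp1 g h) := by
    intro M g
    induction g using hfree.hom_induction with
    | id1 => intro h hh; rwa [A.id_comp1]
    | comp1_gen g b ih => intro h hh; rw [A.comp1_assoc]; exact ih _ (gen_comp1 b h hh)
  simpa only [A.comp1_id] using prepend f (A.id1 Y) id1

end TwoCat.IsFreeOn

namespace TwoPseudoFunctor

variable {A : TwoCat.{u}} {B : TwoCat.{v}} {E : A.Obj → A.Obj → Type u}
  (F : TwoPseudoFunctor A B)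

section Paths

variable (gen : ∀ {X Y : A.Obj}, E X Y → A.Hom X Y)

noncomputable def mapPath {X Y : A.Obj} (q : GPath E X Y) : B.Hom (F.obj X) (F.obj Y) :=
  GPath.rec (motive := fun Y _ => B.Hom (F.obj X) (F.obj Y))
    (B.id1 (F.obj X)) (fun _ b ih => B.comp1 ih (F.map1 (gen b))) q

noncomputable def iconPath {X Y : A.Obj} (q : GPath E X Y) :
    B.Two (F.mapPath gen q) (F.map1 (q.compose gen)) :=
  GPath.rec (motive := fun _ q => B.Two (F.mapPath gen q) (F.map1 (q.compose gen)))
    (F.unitor X)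
    (fun q b ih => B.vcomp2 (B.whiskR ih (F.map1 (gen b))) (F.comp2 (q.compose gen) (gen b)))
    q

theorem isInvertible2_iconPath {X Y : A.Obj} (q : GPath E X Y) :
    B.IsInvertible2 (F.iconPath gen q) := by
  induction q with
  | nil => exact F.unitor_inv _
  | cons q b ih => exact (ih.whiskR _).vcomp2 (F.comp2_inv _ _)

end Paths

variable {gen : ∀ {X Y : A.Obj}, E X Y → A.Hom X Y} (hfree : A.IsFreeOn gen)

noncomputable def strictMap1 {X Y : A.Obj} (f : A.Hom X Y) : B.Hom (F.obj X) (F.obj Y) :=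
  F.mapPath gen (hfree.path f)

theorem strictMap1_id1 (X : A.Obj) : F.strictMap1 hfree (A.id1 X) = B.id1 (F.obj X) := by
  rw [strictMap1, hfree.path_id1]; rfl

theorem strictMap1_comp1_gen {X Y Z : A.Obj} (f : A.Hom X Y) (b : E Y Z) :
    F.strictMap1 hfree (A.comp1 f (gen b)) = B.comp1 (F.strictMap1 hfree f) (F.map1 (gen b)) := by
  rw [strictMap1, hfree.path_comp1_gen]; rfl

theorem strictMap1_comp1 {X Y Z : A.Obj} (f : A.Hom X Y) (g : A.Hom Y Z) :
    F.strictMap1 hfree (A.comp1 f g) = B.comp1 (F.strictMap1 hfree f) (F.strictMap1 hfree g) := by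
  induction g using hfree.hom_induction with
  | id1 => rw [A.comp1_id, strictMap1_id1, B.comp1_id]
  | comp1_gen g b ih =>
    rw [← A.comp1_assoc, strictMap1_comp1_gen, strictMap1_comp1_gen, ih, B.comp1_assoc]

theorem strictMap1_gen {X Y : A.Obj} (a : E X Y) : F.strictMap1 hfree (gen a) = F.map1 (gen a) := by
  conv_lhs => rw [← A.id_comp1 (gen a)]
  rw [strictMap1_comp1_gen, strictMap1_id1, B.id_comp1]

theorem strictMap1_gen_comp1 {X Y Z : A.Obj} (a : E X Y) (g : A.Hom Y Z) :
    F.strictMap1 hfree (A.comp1 (gen a) g) = B.comp1 (F.map1 (gen a)) (F.strictMap1 hfree g) := by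
  rw [strictMap1_comp1, strictMap1_gen]

noncomputable def icon {X Y : A.Obj} (f : A.Hom X Y) : B.Two (F.strictMap1 hfree f) (F.map1 f) :=
  B.cast2 rfl (congrArg F.map1 (hfree.compose_path f)) (F.iconPath gen (hfree.path f))

theorem icon_heq_iconPath {X Y : A.Obj} (f : A.Hom X Y) :
    HEq (F.icon hfree f) (F.iconPath gen (hfree.path f)) :=
  B.cast2_heq _ _ _

theorem icon_hcongr {X Y : A.Obj} {f f' : A.Hom X Y} (hf : f = f') :
    HEq (F.icon hfree f) (F.icon hfree f') := by
  subst hf; rfl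

theorem isInvertible2_icon {X Y : A.Obj} (f : A.Hom X Y) : B.IsInvertible2 (F.icon hfree f) :=
  (F.isInvertible2_iconPath gen _).of_heq rfl (congrArg F.map1 (hfree.compose_path f))
    (F.icon_heq_iconPath hfree f).symm

theorem icon_id1 (X : A.Obj) : HEq (F.icon hfree (A.id1 X)) (F.unitor X) := by
  refine (F.icon_heq_iconPath hfree _).trans ?_
  rw [hfree.path_id1]
  rfl

theorem icon_comp1_gen {X Y Z : A.Obj} (f : A.Hom X Y) (b : E Y Z) :
    HEq (F.icon hfree (A.comp1 f (gen b)))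
      (B.vcomp2 (B.whiskR (F.icon hfree f) (F.map1 (gen b))) (F.comp2 f (gen b))) := by
  refine (F.icon_heq_iconPath hfree _).trans ?_
  rw [hfree.path_comp1_gen]
  refine HEq.trans (b := B.vcomp2 (B.whiskR (F.iconPath gen (hfree.path f)) (F.map1 (gen b)))
    (F.comp2 ((hfree.path f).compose gen) (gen b))) HEq.rfl ?_
  congr! 1 <;> first | rw [hfree.compose_path] | skip
  congr! 1 <;> first | rw [hfree.compose_path] | skip
  exact (F.icon_heq_iconPath hfree f).symm

theorem whiskerAssoc_icon {X Y : A.Obj} (g : A.Hom X Y) :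
    ∀ {O R : A.Obj} (f : A.Hom O X) (k : A.Hom Y R),
      B.WhiskerAssoc (F.map1 f) (F.icon hfree g) (F.map1 k) := by
  induction g using hfree.hom_induction with
  | id1 =>
    intro O R f k
    exact (F.whiskerAssoc_unitor f k).of_heq (F.strictMap1_id1 hfree _).symm rfl
      (F.icon_id1 hfree _).symm
  | comp1_gen g b ih =>
    intro O R f k
    refine .of_heq (F.strictMap1_comp1_gen hfree g b).symm rfl (F.icon_comp1_gen hfree g b).symm ?_
    refine .vcomp2 (.whiskR ?_ (ih f (gen b))) (F.whiskerAssoc_comp2 f g (gen b) k)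
    -- trade the right whisker `F b · F k` for `F (b k)` along `χ_{b,k}`
    exact (ih f (A.comp1 (gen b) k)).of_invertible_right _ (F.comp2_inv (gen b) k)

theorem icon_gen {X Y : A.Obj} (a : E X Y) :
    HEq (F.icon hfree (gen a)) (B.id2 (F.map1 (gen a))) := by
  refine (F.icon_hcongr hfree (A.id_comp1 (gen a)).symm).trans <|
    (F.icon_comp1_gen hfree _ a).trans <| HEq.trans ?_ (F.unit_law_l_heq (gen a))
  congr! 1 <;> first | rw [F.strictMap1_id1] | skip
  congr! 1 <;> first | rw [F.strictMap1_id1] | skip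
  exact F.icon_id1 hfree X

theorem icon_gen_comp1 {X Y Z : A.Obj} (a : E X Y) (h : A.Hom Y Z) :
    HEq (F.icon hfree (A.comp1 (gen a) h))
      (B.vcomp2 (B.whiskL (F.map1 (gen a)) (F.icon hfree h)) (F.comp2 (gen a) h)) := by
  induction h using hfree.hom_induction with
  | id1 =>
    refine (F.icon_hcongr hfree (A.comp1_id (gen a))).trans <| (F.icon_gen hfree a).trans <|
      (F.unit_law_r_heq (gen a)).symm.trans ?_
    congr! 1 <;> first | rw [F.strictMap1_id1] | skip
    congr! 1 <;> first | rw [F.strictMap1_id1] | skip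
    exact (F.icon_id1 hfree Y).symm
  | comp1_gen h b ih =>
    have reassoc : HEq
        (B.vcomp2 (B.whiskR (B.vcomp2 (B.whiskL (F.map1 (gen a)) (F.icon hfree h))
          (F.comp2 (gen a) h)) (F.map1 (gen b))) (F.comp2 (A.comp1 (gen a) h) (gen b)))
        (B.vcomp2 (B.whiskL (F.map1 (gen a)) (B.vcomp2 (B.whiskR (F.icon hfree h)
          (F.map1 (gen b))) (F.comp2 h (gen b)))) (F.comp2 (gen a) (A.comp1 h (gen b)))) := by
      rw [B.whiskR_vcomp2, B.vcomp2_assoc, B.whiskL_vcomp2, B.vcomp2_assoc]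
      congr! 1 <;> first | simp only [A.comp1_assoc, B.comp1_assoc] | skip
      · exact (F.whiskerAssoc_icon hfree h (gen a) (gen b)).symm
      · exact F.assoc_law_heq _ _ _
    refine (F.icon_hcongr hfree (A.comp1_assoc _ _ _).symm).trans <|
      (F.icon_comp1_gen hfree _ b).trans <| HEq.trans ?_ (reassoc.trans ?_)
    · congr! 1 <;> first | simp only [F.strictMap1_comp1, F.strictMap1_gen] | skip
      congr! 1
      simp only [F.strictMap1_comp1, F.strictMap1_gen]
    · congr! 1 <;> first | simp only [F.strictMap1_comp1, F.strictMap1_gen] | skip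
      congr! 1 <;> first | simp only [F.strictMap1_comp1, F.strictMap1_gen] | skip
      exact (F.icon_comp1_gen hfree h b).symm

noncomputable def iconInv {X Y : A.Obj} (f : A.Hom X Y) :
    B.Two (F.map1 f) (F.strictMap1 hfree f) :=
  (F.isInvertible2_icon hfree f).choose

theorem icon_vcomp2_iconInv {X Y : A.Obj} (f : A.Hom X Y) :
    B.vcomp2 (F.icon hfree f) (F.iconInv hfree f) = B.id2 _ :=
  (F.isInvertible2_icon hfree f).choose_spec.1

theorem iconInv_vcomp2_icon {X Y : A.Obj} (f : A.Hom X Y) :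
    B.vcomp2 (F.iconInv hfree f) (F.icon hfree f) = B.id2 _ :=
  (F.isInvertible2_icon hfree f).choose_spec.2

noncomputable def strictMap2 {X Y : A.Obj} {f g : A.Hom X Y} (φ : A.Two f g) :
    B.Two (F.strictMap1 hfree f) (F.strictMap1 hfree g) :=
  B.vcomp2 (B.vcomp2 (F.icon hfree f) (F.map2 φ)) (F.iconInv hfree g)

theorem strictMap2_hcongr {X Y : A.Obj} {f g f' g' : A.Hom X Y} (hf : f = f') (hg : g = g')
    {φ : A.Two f g} {φ' : A.Two f' g'} (hφ : HEq φ φ') :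
    HEq (F.strictMap2 hfree φ) (F.strictMap2 hfree φ') := by
  subst hf hg; cases hφ; rfl

theorem strictMap2_vcomp2_icon {X Y : A.Obj} {f g : A.Hom X Y} (φ : A.Two f g) :
    B.vcomp2 (F.strictMap2 hfree φ) (F.icon hfree g) = B.vcomp2 (F.icon hfree f) (F.map2 φ) := by
  rw [strictMap2, B.vcomp2_assoc, iconInv_vcomp2_icon, B.vcomp2_id]

theorem strictMap2_id2 {X Y : A.Obj} (f : A.Hom X Y) :
    F.strictMap2 hfree (A.id2 f) = B.id2 _ := by
  rw [strictMap2, F.map2_id, B.vcomp2_id, icon_vcomp2_iconInv]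

theorem strictMap2_vcomp2 {X Y : A.Obj} {f g h : A.Hom X Y} (φ : A.Two f g) (ψ : A.Two g h) :
    F.strictMap2 hfree (A.vcomp2 φ ψ)
      = B.vcomp2 (F.strictMap2 hfree φ) (F.strictMap2 hfree ψ) := by
  simp only [strictMap2, F.map2_vcomp, B.vcomp2_assoc]
  rw [← B.vcomp2_assoc (F.iconInv hfree g), iconInv_vcomp2_icon, B.id_vcomp2]

theorem strictMap2_whiskL_gen {X Y Z : A.Obj} (a : E X Y) {g h : A.Hom Y Z} (ψ : A.Two g h) :
    HEq (F.strictMap2 hfree (A.whiskL (gen a) ψ))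
      (B.whiskL (F.map1 (gen a)) (F.strictMap2 hfree ψ)) := by
  have natural : B.vcomp2 (B.whiskL (F.map1 (gen a)) (F.strictMap2 hfree ψ))
        (B.vcomp2 (B.whiskL (F.map1 (gen a)) (F.icon hfree h)) (F.comp2 (gen a) h))
      = B.vcomp2 (B.vcomp2 (B.whiskL (F.map1 (gen a)) (F.icon hfree g)) (F.comp2 (gen a) g))
          (F.map2 (A.whiskL (gen a) ψ)) := by
    rw [← B.vcomp2_assoc, ← B.whiskL_vcomp2, strictMap2_vcomp2_icon, B.whiskL_vcomp2,
      B.vcomp2_assoc, F.comp2_natL, ← B.vcomp2_assoc]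
  refine (F.isInvertible2_icon hfree _).hcancel_right (F.strictMap1_gen_comp1 hfree a g)
    (F.strictMap1_gen_comp1 hfree a h) rfl (F.icon_gen_comp1 hfree a h) ?_
  rw [strictMap2_vcomp2_icon, natural]
  exact B.vcomp2_hcongr (F.strictMap1_gen_comp1 hfree a g) rfl rfl (F.icon_gen_comp1 hfree a g)
    HEq.rfl

theorem strictMap2_whiskR_gen {X Y Z : A.Obj} {f g : A.Hom X Y} (ψ : A.Two f g) (b : E Y Z) :
    HEq (F.strictMap2 hfree (A.whiskR ψ (gen b)))
      (B.whiskR (F.strictMap2 hfree ψ) (F.map1 (gen b))) := by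
  have natural : B.vcomp2 (B.whiskR (F.strictMap2 hfree ψ) (F.map1 (gen b)))
        (B.vcomp2 (B.whiskR (F.icon hfree g) (F.map1 (gen b))) (F.comp2 g (gen b)))
      = B.vcomp2 (B.vcomp2 (B.whiskR (F.icon hfree f) (F.map1 (gen b))) (F.comp2 f (gen b)))
          (F.map2 (A.whiskR ψ (gen b))) := by
    rw [← B.vcomp2_assoc, ← B.whiskR_vcomp2, strictMap2_vcomp2_icon, B.whiskR_vcomp2,
      B.vcomp2_assoc, F.comp2_natR, ← B.vcomp2_assoc]
  refine (F.isInvertible2_icon hfree _).hcancel_right (F.strictMap1_comp1_gen hfree f b)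
    (F.strictMap1_comp1_gen hfree g b) rfl (F.icon_comp1_gen hfree g b) ?_
  rw [strictMap2_vcomp2_icon, natural]
  exact B.vcomp2_hcongr (F.strictMap1_comp1_gen hfree f b) rfl rfl (F.icon_comp1_gen hfree f b)
    HEq.rfl

theorem strictMap2_whiskL {X Y Z : A.Obj} (f : A.Hom X Y) {g h : A.Hom Y Z} (ψ : A.Two g h) :
    HEq (F.strictMap2 hfree (A.whiskL f ψ))
      (B.whiskL (F.strictMap1 hfree f) (F.strictMap2 hfree ψ)) := by
  induction f using hfree.hom_induction_left with
  | id1 =>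
    refine (F.strictMap2_hcongr hfree (A.id_comp1 g) (A.id_comp1 h) (A.whiskL_id1 ψ)).trans ?_
    refine HEq.trans (B.whiskL_id1 _).symm ?_
    rw [strictMap1_id1]
  | gen_comp1 a f ih =>
    refine (F.strictMap2_hcongr hfree (A.comp1_assoc _ _ g) (A.comp1_assoc _ _ h)
      (A.whiskL_comp1 (gen a) f ψ)).trans <| (F.strictMap2_whiskL_gen hfree a _).trans ?_
    rw [strictMap1_gen_comp1]
    refine HEq.trans ?_ (B.whiskL_comp1 _ _ _).symm
    exact B.whiskL_hcongr rfl (F.strictMap1_comp1 hfree f g) (F.strictMap1_comp1 hfree f h) ih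

theorem strictMap2_whiskR {X Y Z : A.Obj} {f g : A.Hom X Y} (ψ : A.Two f g) (h : A.Hom Y Z) :
    HEq (F.strictMap2 hfree (A.whiskR ψ h))
      (B.whiskR (F.strictMap2 hfree ψ) (F.strictMap1 hfree h)) := by
  induction h using hfree.hom_induction with
  | id1 =>
    refine (F.strictMap2_hcongr hfree (A.comp1_id f) (A.comp1_id g) (A.whiskR_id1 ψ)).trans ?_
    refine HEq.trans (B.whiskR_id1 _).symm ?_
    rw [strictMap1_id1]
  | comp1_gen h b ih =>
    refine (F.strictMap2_hcongr hfree (A.comp1_assoc f _ _).symm (A.comp1_assoc g _ _).symm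
      (A.whiskR_comp1 ψ h (gen b))).trans <| (F.strictMap2_whiskR_gen hfree _ b).trans ?_
    rw [strictMap1_comp1_gen]
    refine HEq.trans ?_ (B.whiskR_comp1 _ _ _).symm
    exact B.whiskR_hcongr (F.strictMap1_comp1 hfree f h) (F.strictMap1_comp1 hfree g h) rfl ih

noncomputable def strictify : TwoFunctor A B where
  obj := F.obj
  map1 := F.strictMap1 hfree
  map2 := F.strictMap2 hfree
  map1_id := F.strictMap1_id1 hfree
  map1_comp := F.strictMap1_comp1 hfree
  map2_id := F.strictMap2_id2 hfree
  map2_vcomp := F.strictMap2_vcomp2 hfree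
  map2_whiskL := F.strictMap2_whiskL hfree
  map2_whiskR := F.strictMap2_whiskR hfree

theorem map1_heq_strictMap1 (G : TwoFunctor A B) (hobj : ∀ X, G.obj X = F.obj X)
    (hgen : ∀ {X Y : A.Obj} (a : E X Y), HEq (G.map1 (gen a)) (F.map1 (gen a)))
    {X Y : A.Obj} (f : A.Hom X Y) : HEq (G.map1 f) (F.strictMap1 hfree f) := by
  induction f using hfree.hom_induction with
  | id1 =>
    rw [G.map1_id, F.strictMap1_id1]
    exact B.id1_hcongr (hobj X)
  | comp1_gen f b ih =>
    rw [G.map1_comp, F.strictMap1_comp1_gen]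
    exact B.comp1_hcongr (hobj _) (hobj _) (hobj _) ih (hgen b)

theorem heq_icon {m : ∀ {X Y : A.Obj}, A.Hom X Y → B.Hom (F.obj X) (F.obj Y)}
    (hm : ∀ {X Y : A.Obj} (f : A.Hom X Y), m f = F.strictMap1 hfree f)
    (e : ∀ {X Y : A.Obj} (f : A.Hom X Y), B.Two (m f) (F.map1 f))
    (he_id1 : ∀ X : A.Obj, HEq (e (A.id1 X)) (F.unitor X))
    (he_gen_comp1 : ∀ {X Y Z : A.Obj} (a : E X Y) (h : A.Hom Y Z),
      HEq (e (A.comp1 (gen a) h)) (B.vcomp2 (B.whiskL (F.map1 (gen a)) (e h)) (F.comp2 (gen a) h)))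
    {X Y : A.Obj} (f : A.Hom X Y) : HEq (e f) (F.icon hfree f) := by
  induction f using hfree.hom_induction_left with
  | id1 => exact (he_id1 Y).trans (F.icon_id1 hfree Y).symm
  | gen_comp1 a h ih =>
    refine (he_gen_comp1 a h).trans <| HEq.trans ?_ (F.icon_gen_comp1 hfree a h).symm
    exact B.vcomp2_hcongr (congrArg _ (hm h)) rfl rfl (B.whiskL_hcongr rfl (hm h) rfl ih) HEq.rfl

theorem strictify_unique (G : TwoFunctor A B) (hobj : ∀ X : A.Obj, G.obj X = F.obj X)
    (e : ∀ {X Y : A.Obj} (f : A.Hom X Y),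
      B.Two (B.castHom (hobj X) (hobj Y) (G.map1 f)) (F.map1 f))
    (einv : ∀ {X Y : A.Obj} (f : A.Hom X Y),
      B.Two (F.map1 f) (B.castHom (hobj X) (hobj Y) (G.map1 f)))
    (hgen : ∀ {X Y : A.Obj} (a : E X Y), HEq (G.map1 (gen a)) (F.map1 (gen a)))
    (hinv : ∀ {X Y : A.Obj} (f : A.Hom X Y), B.vcomp2 (e f) (einv f) = B.id2 _)
    (he_id1 : ∀ X : A.Obj, HEq (e (A.id1 X)) (F.unitor X))
    (he_gen_comp1 : ∀ {X Y Z : A.Obj} (a : E X Y) (h : A.Hom Y Z),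
      HEq (e (A.comp1 (gen a) h)) (B.vcomp2 (B.whiskL (F.map1 (gen a)) (e h)) (F.comp2 (gen a) h)))
    (hmap2 : ∀ {X Y : A.Obj} {f g : A.Hom X Y} (φ : A.Two f g),
      HEq (G.map2 φ) (B.vcomp2 (B.vcomp2 (e f) (F.map2 φ)) (einv g))) :
    G = F.strictify hfree ∧ HEq @e fun {X Y : A.Obj} (f : A.Hom X Y) => F.icon hfree f := by
  have hmap1 : ∀ {X Y : A.Obj} (f : A.Hom X Y),
      B.castHom (hobj X) (hobj Y) (G.map1 f) = F.strictMap1 hfree f := fun f =>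
    eq_of_heq ((B.castHom_heq _ _ _).trans (F.map1_heq_strictMap1 hfree G hobj hgen f))
  have he : ∀ {X Y : A.Obj} (f : A.Hom X Y), HEq (e f) (F.icon hfree f) :=
    F.heq_icon hfree hmap1 e he_id1 he_gen_comp1
  have heinv : ∀ {X Y : A.Obj} (f : A.Hom X Y), HEq (einv f) (F.iconInv hfree f) := fun f =>
    B.inverse_heq_of_heq (hmap1 f) rfl (he f) (hinv f) (F.iconInv_vcomp2_icon hfree f)
  obtain rfl : G = F.strictify hfree := by
    refine TwoFunctor.ext_of_heq hobj (F.map1_heq_strictMap1 hfree G hobj hgen) fun φ => ?_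
    exact (hmap2 φ).trans <| B.vcomp2_hcongr (hmap1 _) rfl (hmap1 _)
      (B.vcomp2_hcongr (hmap1 _) rfl rfl (he _) HEq.rfl) (heinv _)
  exact ⟨rfl, heq_of_eq (funext fun _ => funext fun _ => funext fun f => eq_of_heq (he f))⟩

end TwoPseudoFunctor

theorem stmt0_strictification_of_pseudofunctors_out_of_free_two_categories
    (A : TwoCat.{u}) (B : TwoCat.{v}) (E : A.Obj → A.Obj → Type u)
    (gen : ∀ {X Y : A.Obj}, E X Y → A.Hom X Y)
    (hfree : ∀ X Y : A.Obj,
      Function.Bijective (fun ρ : GPath E X Y => evalP A (fun {_ _} e => gen e) ρ))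
    (F : TwoPseudoFunctor A B) :
    ∃ (Fbar : TwoFunctor A B) (hobj : ∀ X : A.Obj, Fbar.obj X = F.obj X)
      (e : ∀ {X Y : A.Obj} (f : A.Hom X Y),
        B.Two (B.castHom (hobj X) (hobj Y) (Fbar.map1 f)) (F.map1 f))
      (einv : ∀ {X Y : A.Obj} (f : A.Hom X Y),
        B.Two (F.map1 f) (B.castHom (hobj X) (hobj Y) (Fbar.map1 f))),
      -- `F̄` agrees with `F` on generating morphisms and `e` is an invertible icon
      ((∀ {X Y : A.Obj} (a : E X Y), HEq (Fbar.map1 (gen a)) (F.map1 (gen a))) ∧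
        (∀ {X Y : A.Obj} (f : A.Hom X Y),
          B.vcomp2 (e f) (einv f) = B.id2 _ ∧ B.vcomp2 (einv f) (e f) = B.id2 _)) ∧
      -- the component at an identity (the empty path) is the unitor of `F`
      (∀ X : A.Obj, HEq (e (A.id1 X)) (F.unitor X)) ∧
      -- the component at a generating morphism is the identity
      (∀ {X Y : A.Obj} (a : E X Y), B.IsIdentity2 (e (gen a))) ∧
      -- the component at a composite `h∘g` with `g` generating is the pasting
      -- of `e_h` with the compositor `χ_{h,g}`
      (∀ {X Y Z : A.Obj} (a : E X Y) (h : A.Hom Y Z),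
        HEq (e (A.comp1 (gen a) h))
          (B.vcomp2 (B.whiskL (F.map1 (gen a)) (e h)) (F.comp2 (gen a) h))) ∧
      -- `F̄` acts on 2-cells by `e_g⁻¹ ∘ Fφ ∘ e_f`
      (∀ {X Y : A.Obj} {f g : A.Hom X Y} (φ : A.Two f g),
        HEq (Fbar.map2 φ) (B.vcomp2 (B.vcomp2 (e f) (F.map2 φ)) (einv g))) ∧
      -- uniqueness of the pair `(F̄, e)`
      (∀ (Fbar' : TwoFunctor A B) (hobj' : ∀ X : A.Obj, Fbar'.obj X = F.obj X)
        (e' : ∀ {X Y : A.Obj} (f : A.Hom X Y),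
          B.Two (B.castHom (hobj' X) (hobj' Y) (Fbar'.map1 f)) (F.map1 f))
        (einv' : ∀ {X Y : A.Obj} (f : A.Hom X Y),
          B.Two (F.map1 f) (B.castHom (hobj' X) (hobj' Y) (Fbar'.map1 f))),
        ((∀ {X Y : A.Obj} (a : E X Y), HEq (Fbar'.map1 (gen a)) (F.map1 (gen a))) ∧
          (∀ {X Y : A.Obj} (f : A.Hom X Y),
            B.vcomp2 (e' f) (einv' f) = B.id2 _ ∧ B.vcomp2 (einv' f) (e' f) = B.id2 _)) →
        (∀ X : A.Obj, HEq (e' (A.id1 X)) (F.unitor X)) →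
        (∀ {X Y : A.Obj} (a : E X Y), B.IsIdentity2 (e' (gen a))) →
        (∀ {X Y Z : A.Obj} (a : E X Y) (h : A.Hom Y Z),
          HEq (e' (A.comp1 (gen a) h))
            (B.vcomp2 (B.whiskL (F.map1 (gen a)) (e' h)) (F.comp2 (gen a) h))) →
        (∀ {X Y : A.Obj} {f g : A.Hom X Y} (φ : A.Two f g),
          HEq (Fbar'.map2 φ) (B.vcomp2 (B.vcomp2 (e' f) (F.map2 φ)) (einv' g))) →
        Fbar' = Fbar ∧ HEq @e' @e) := by
  have hA := TwoCat.IsFreeOn.of_bijective_evalP hfree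
  refine ⟨F.strictify hA, fun _ => rfl, F.icon hA, F.iconInv hA,
    ⟨fun a => heq_of_eq (F.strictMap1_gen hA a),
      fun f => ⟨F.icon_vcomp2_iconInv hA f, F.iconInv_vcomp2_icon hA f⟩⟩,
    F.icon_id1 hA,
    fun a => ⟨F.strictMap1_gen hA a,
      (F.icon_gen hA a).trans (B.id2_hcongr (F.strictMap1_gen hA a).symm)⟩,
    F.icon_gen_comp1 hA, fun _ => HEq.rfl, ?_⟩
  rintro G hobj e einv ⟨hgen, hinv⟩ he_id1 - he_gen_comp1 hmap2
  exact F.strictify_unique hA G hobj e einv hgen (fun f => (hinv f).1) he_id1 he_gen_comp1 hmap2
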